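/- Let Φ_T ∈ ℝ^{m×t} be a matrix with full column rank (i.e., the map x ↦ Φ_T x is injective), let C ⊆ ℝ^m be a finite nonempty codebook, let Ŷ ∈ C, and let R := { y ∈ ℝ^m : ‖y − Ŷ‖₂ ≤ ‖y − ω′‖₂ for all ω′ ∈ C } be the Voronoi region of Ŷ. Define Q := { (x, y) ∈ ℝ^t × R : ‖y − Φ_T x‖₂ ≤ ‖y′ − Φ_T x′‖₂ for all (x′, y′) ∈ ℝ^t × R }. Then Q is nonempty, closed, and convex, and there exists a unique pair (x̃, ỹ) ∈ Q satisfying ‖ỹ − Ŷ‖₂ ≤ ‖y − Ŷ‖₂ for all (x, y) ∈ Q. -/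

import Mathlib

/-!
Only the residual `z = y - Φ x` enters the objective, and it ranges over `D = R + range Φ`.
Since the Voronoi region `R` is a polyhedron, Fourier–Motzkin elimination shows that `D` is again
a polyhedron, hence closed, so `D` has a unique point `z₀` of minimal norm (strict convexity of
the Euclidean norm). Hence `Q = {(x, y) | y ∈ R, y - Φ x = z₀}`, which is nonempty, closed and
convex. Its projection to `y` is `R ∩ (z₀ + range Φ)`, a closed convex set with a unique point
nearest to `Ŷ`, and injectivity of `Φ` recovers `x` from `y`.
-/

open Matrix

/-- The vector `v ∈ ℝ^m` viewed as an element of Euclidean (ℓ₂) space. -/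
noncomputable def toE {m : ℕ} (v : Fin m → ℝ) : EuclideanSpace ℝ (Fin m) :=
  (WithLp.equiv 2 (Fin m → ℝ)).symm v

open Set
open scoped Pointwise

universe u

lemma Finset.exists_forall_le_and_forall_ge {α : Type*} [LinearOrder α] [Nonempty α]
    (s t : Finset α) (H : ∀ x ∈ s, ∀ y ∈ t, x ≤ y) :
    ∃ b, (∀ x ∈ s, x ≤ b) ∧ ∀ y ∈ t, b ≤ y := by
  rcases s.eq_empty_or_nonempty with rfl | hs
  · rcases t.eq_empty_or_nonempty with rfl | ht
    · obtain ⟨b⟩ := ‹Nonempty α›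
      exact ⟨b, by simp, by simp⟩
    · exact ⟨t.min' ht, by simp, fun y hy => t.min'_le y hy⟩
  · exact ⟨s.max' hs, fun x hx => s.le_max' x hx,
      fun y hy => s.max'_le hs _ fun x hx => H x hx y hy⟩

/-- Fourier–Motzkin elimination of a single variable `r`. -/
lemma exists_forall_le_mul_iff {𝕜 ι : Type*} [Field 𝕜] [LinearOrder 𝕜] [IsStrictOrderedRing 𝕜]
    [Fintype ι] (c d : ι → 𝕜) :
    (∃ r, ∀ i, d i ≤ r * c i) ↔
      (∀ i, c i = 0 → d i ≤ 0) ∧ ∀ i j, 0 < c i → c j < 0 → c i * d j ≤ c j * d i := by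
  classical
  constructor
  · rintro ⟨r, hr⟩
    refine ⟨fun i hi => by simpa [hi] using hr i, fun i j hi hj => ?_⟩
    nlinarith [hr i, hr j]
  · rintro ⟨hzero, hpair⟩
    obtain ⟨r, hlo, hhi⟩ := Finset.exists_forall_le_and_forall_ge
      ((Finset.univ.filter (0 < c ·)).image (fun i => d i / c i))
      ((Finset.univ.filter (c · < 0)).image (fun i => d i / c i)) (by
        simp only [Finset.forall_mem_image, Finset.mem_filter, Finset.mem_univ, true_and]
        intro i hi j hj
        rw [div_le_iff₀ hi, div_mul_eq_mul_div, le_div_iff_of_neg hj]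
        linarith [hpair i j hi hj])
    simp only [Finset.forall_mem_image, Finset.mem_filter, Finset.mem_univ, true_and] at hlo hhi
    refine ⟨r, fun i => ?_⟩
    rcases lt_trichotomy (c i) 0 with hi | hi | hi
    · exact (le_div_iff_of_neg hi).mp (hhi hi)
    · simpa [hi] using hzero i hi
    · exact (div_le_iff₀ hi).mp (hlo hi)

section Polyhedron

variable {E : Type u} [AddCommGroup E] [Module ℝ E]

def IsPolyhedron (S : Set E) : Prop :=
  ∃ (ι : Type u) (_ : Fintype ι) (f : ι → Module.Dual ℝ E) (b : ι → ℝ),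
    S = ⋂ i, f i ⁻¹' Iic (b i)

lemma IsPolyhedron.convex {S : Set E} (hS : IsPolyhedron S) : Convex ℝ S := by
  obtain ⟨ι, _, f, b, rfl⟩ := hS
  exact convex_iInter fun i => (convex_Iic (b i)).linear_preimage (f i)

lemma Set.mem_add_span_singleton {R M : Type*} [Ring R] [AddCommGroup M] [Module R M]
    {S : Set M} {v z : M} : z ∈ S + (R ∙ v : Set M) ↔ ∃ r : R, z - r • v ∈ S := by
  simp only [Set.mem_add, SetLike.mem_coe, Submodule.mem_span_singleton]
  constructor
  · rintro ⟨w, hw, _, ⟨r, rfl⟩, rfl⟩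
    exact ⟨r, by simpa using hw⟩
  · rintro ⟨r, hr⟩
    exact ⟨_, hr, _, ⟨r, rfl⟩, sub_add_cancel z _⟩

lemma IsPolyhedron.add_span_singleton {S : Set E} (hS : IsPolyhedron S) (v : E) :
    IsPolyhedron (S + (ℝ ∙ v : Set E)) := by
  classical
  obtain ⟨ι, _, f, b, rfl⟩ := hS
  set c : ι → ℝ := fun i => f i v
  refine ⟨{i // c i = 0} ⊕ {p : ι × ι // 0 < c p.1 ∧ c p.2 < 0}, inferInstance,
    Sum.elim (fun i => f i) (fun p => c p.1.1 • f p.1.2 - c p.1.2 • f p.1.1),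
    Sum.elim (fun i => b i) (fun p => c p.1.1 * b p.1.2 - c p.1.2 * b p.1.1), ?_⟩
  ext z
  have hline : (∃ r : ℝ, z - r • v ∈ ⋂ i, f i ⁻¹' Iic (b i)) ↔
      ∃ r, ∀ i, f i z - b i ≤ r * c i := by
    simp only [mem_iInter, mem_preimage, mem_Iic, map_sub, map_smul, smul_eq_mul]
    exact exists_congr fun r => forall_congr' fun i => by constructor <;> intro h <;> linarith
  rw [Set.mem_add_span_singleton, hline, exists_forall_le_mul_iff]
  simp only [mem_iInter, mem_preimage, mem_Iic, Sum.forall, Sum.elim_inl, Sum.elim_inr,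
    Subtype.forall, Prod.forall, LinearMap.sub_apply, LinearMap.smul_apply, smul_eq_mul]
  refine and_congr (forall₂_congr fun i _ => sub_nonpos) (forall_congr' fun i =>
    forall_congr' fun j => ⟨fun h hij => ?_, fun h hi hj => ?_⟩)
  · linarith [h hij.1 hij.2]
  · linarith [h ⟨hi, hj⟩]

lemma IsPolyhedron.add_submodule {S : Set E} (hS : IsPolyhedron S) {V : Submodule ℝ E}
    (hV : V.FG) : IsPolyhedron (S + (V : Set E)) := by
  induction V, hV using Submodule.fg_induction generalizing S with
  | singleton v => exact hS.add_span_singleton v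
  | sup V₁ V₂ _ _ ih₁ ih₂ =>
    rw [Submodule.coe_sup, ← add_assoc]
    exact ih₂ (ih₁ hS)

lemma IsPolyhedron.isClosed [TopologicalSpace E] [IsTopologicalAddGroup E] [ContinuousSMul ℝ E]
    [T2Space E] [FiniteDimensional ℝ E] {S : Set E} (hS : IsPolyhedron S) : IsClosed S := by
  obtain ⟨ι, _, f, b, rfl⟩ := hS
  exact isClosed_iInter fun i => isClosed_Iic.preimage (f i).continuous_of_finiteDimensional

end Polyhedron

open RealInnerProductSpace in
lemma norm_sub_le_norm_sub_iff_inner_le {E : Type*} [NormedAddCommGroup E]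
    [InnerProductSpace ℝ E] (y u w : E) :
    ‖y - u‖ ≤ ‖y - w‖ ↔ ⟪(2 : ℝ) • (w - u), y⟫ ≤ ‖w‖ ^ 2 - ‖u‖ ^ 2 := by
  rw [← sq_le_sq₀ (norm_nonneg _) (norm_nonneg _), norm_sub_sq_real, norm_sub_sq_real,
    real_inner_smul_left, inner_sub_left, real_inner_comm y u, real_inner_comm y w]
  constructor <;> intro h <;> linarith

lemma isPolyhedron_voronoiCell {E : Type u} [NormedAddCommGroup E] [InnerProductSpace ℝ E]
    (C : Finset E) (u : E) : IsPolyhedron {y | ∀ w ∈ C, ‖y - u‖ ≤ ‖y - w‖} := by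
  refine ⟨C, inferInstance, fun w => innerₛₗ ℝ ((2 : ℝ) • (w.1 - u)),
    fun w => ‖w.1‖ ^ 2 - ‖u‖ ^ 2, ?_⟩
  ext y
  simp only [mem_ofPred_eq, mem_iInter, mem_preimage, mem_Iic, innerₛₗ_apply_apply,
    Subtype.forall, norm_sub_le_norm_sub_iff_inner_le]

section NearestPoint

variable {E : Type*} [NormedAddCommGroup E] {K : Set E}

lemma Convex.eq_of_isMinOn_norm_sub [NormedSpace ℝ E] [StrictConvexSpace ℝ E]
    (hK : Convex ℝ K) {u v₁ v₂ : E} (h₁ : v₁ ∈ K) (h₂ : v₂ ∈ K) (hmin₁ : IsMinOn (‖· - u‖) K v₁)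
    (hmin₂ : IsMinOn (‖· - u‖) K v₂) : v₁ = v₂ := by
  by_contra hne
  have hmid : (1 / 2 : ℝ) • v₁ + (1 / 2 : ℝ) • v₂ ∈ K :=
    hK h₁ h₂ (by norm_num) (by norm_num) (by norm_num)
  have hlt : ‖(1 / 2 : ℝ) • (v₁ - u) + (1 / 2 : ℝ) • (v₂ - u)‖ < ‖v₁ - u‖ :=
    norm_combo_lt_of_ne le_rfl (isMinOn_iff.mp hmin₂ v₁ h₁) (by simpa [sub_eq_zero] using hne)
      (by norm_num) (by norm_num) (by norm_num)
  have hmid_sub : (1 / 2 : ℝ) • (v₁ - u) + (1 / 2 : ℝ) • (v₂ - u) =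
      ((1 / 2 : ℝ) • v₁ + (1 / 2 : ℝ) • v₂) - u := by module
  rw [hmid_sub] at hlt
  exact (isMinOn_iff.mp hmin₁ _ hmid).not_gt hlt

lemma IsClosed.exists_isMinOn_norm_sub [ProperSpace E] (hK : IsClosed K) (hne : K.Nonempty)
    (u : E) : ∃ v ∈ K, IsMinOn (‖· - u‖) K v := by
  obtain ⟨v, hv, hdist⟩ := hK.exists_infDist_eq_dist hne u
  refine ⟨v, hv, isMinOn_iff.mpr fun w hw => ?_⟩
  have := Metric.infDist_le_dist_of_mem (x := u) hw
  rwa [hdist, dist_comm, dist_comm u, dist_eq_norm, dist_eq_norm] at this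

lemma Convex.existsUnique_isMinOn_norm_sub [NormedSpace ℝ E] [ProperSpace E]
    [StrictConvexSpace ℝ E] (hconv : Convex ℝ K) (hclosed : IsClosed K) (hne : K.Nonempty) (u : E) :
    ∃! v, v ∈ K ∧ IsMinOn (‖· - u‖) K v := by
  obtain ⟨v, hv, hmin⟩ := hclosed.exists_isMinOn_norm_sub hne u
  exact ⟨v, ⟨hv, hmin⟩, fun w ⟨hw, hwmin⟩ => hconv.eq_of_isMinOn_norm_sub hw hv hwmin hmin⟩

end NearestPoint

lemma Set.InjOn.existsUnique_isMinOn_comp {α β γ : Type*} [Preorder γ] {π : α → β} {S : Set α}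
    {g : β → γ} (hπ : InjOn π S) (h : ∃! y, y ∈ π '' S ∧ IsMinOn g (π '' S) y) :
    ∃! x, x ∈ S ∧ IsMinOn (g ∘ π) S x := by
  obtain ⟨_, ⟨⟨x, hx, rfl⟩, hmin⟩, huniq⟩ := h
  refine ⟨x, ⟨hx, hmin.comp_mapsTo (mapsTo_image π S) rfl⟩, fun x' ⟨hx', hmin'⟩ => hπ hx' hx ?_⟩
  refine huniq _ ⟨mem_image_of_mem π hx', isMinOn_iff.mpr ?_⟩
  rintro _ ⟨z, hz, rfl⟩
  exact isMinOn_iff.mp hmin' z hz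

section Residual

variable {E : Type u} {F : Type*} [NormedAddCommGroup E] [NormedSpace ℝ E]
  [AddCommGroup F] [Module ℝ F] (L : F →ₗ[ℝ] E) (R : Set E)

def residualMinimizers : Set (F × E) :=
  {p | p.2 ∈ R ∧ ∀ x', ∀ y' ∈ R, ‖p.2 - L p.1‖ ≤ ‖y' - L x'‖}

def residualFiber (z : E) : Set (F × E) :=
  {p | p.2 ∈ R ∧ p.2 - L p.1 = z}

variable {L R}

lemma mem_add_range_iff_exists_sub {z : E} :
    z ∈ R + (LinearMap.range L : Set E) ↔ ∃ x, ∃ y ∈ R, y - L x = z := by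
  simp only [Set.mem_add, SetLike.mem_coe, LinearMap.mem_range]
  constructor
  · rintro ⟨y, hy, _, ⟨x, rfl⟩, rfl⟩
    exact ⟨-x, y, hy, by rw [map_neg, sub_neg_eq_add]⟩
  · rintro ⟨x, y, hy, rfl⟩
    exact ⟨y, hy, _, ⟨-x, rfl⟩, by rw [map_neg, sub_eq_add_neg]⟩

lemma residualMinimizers_eq_residualFiber [StrictConvexSpace ℝ E] {z : E}
    (hconv : Convex ℝ (R + (LinearMap.range L : Set E)))
    (hz : z ∈ R + (LinearMap.range L : Set E))
    (hmin : IsMinOn norm (R + (LinearMap.range L : Set E)) z) :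
    residualMinimizers L R = residualFiber L R z := by
  have hmem : ∀ x, ∀ y ∈ R, y - L x ∈ R + (LinearMap.range L : Set E) :=
    fun x y hy => mem_add_range_iff_exists_sub.mpr ⟨x, y, hy, rfl⟩
  obtain ⟨x₀, y₀, hy₀, rfl⟩ := mem_add_range_iff_exists_sub.mp hz
  ext p
  constructor
  · rintro ⟨hp, hle⟩
    refine ⟨hp, hconv.eq_of_isMinOn_norm_sub (u := 0) (hmem _ _ hp) hz ?_ (by simpa using hmin)⟩
    refine isMinOn_iff.mpr fun w hw => ?_
    rw [sub_zero, sub_zero]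
    exact (hle _ _ hy₀).trans (isMinOn_iff.mp hmin w hw)
  · rintro ⟨hp, hres⟩
    refine ⟨hp, fun x' y' hy' => ?_⟩
    rw [hres]
    exact isMinOn_iff.mp hmin _ (hmem _ _ hy')

lemma residualFiber_nonempty {z : E} (hz : z ∈ R + (LinearMap.range L : Set E)) :
    (residualFiber L R z).Nonempty := by
  obtain ⟨x, y, hy, rfl⟩ := mem_add_range_iff_exists_sub.mp hz
  exact ⟨(x, y), hy, rfl⟩

lemma convex_residualFiber (hR : Convex ℝ R) (z : E) : Convex ℝ (residualFiber L R z) :=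
  (hR.linear_preimage (LinearMap.snd ℝ F E)).inter
    ((convex_singleton z).linear_preimage (LinearMap.snd ℝ F E - L ∘ₗ LinearMap.fst ℝ F E))

lemma isClosed_residualFiber [TopologicalSpace F] (hL : Continuous L) (hR : IsClosed R) (z : E) :
    IsClosed (residualFiber L R z) :=
  (hR.preimage continuous_snd).inter
    (isClosed_eq (continuous_snd.sub (hL.comp continuous_fst)) continuous_const)

lemma image_snd_residualFiber (z : E) :
    Prod.snd '' residualFiber L R z = R ∩ (· - z) ⁻¹' (LinearMap.range L : Set E) := by
  ext y
  constructor
  · rintro ⟨⟨x, y⟩, ⟨hy, rfl⟩, rfl⟩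
    exact ⟨hy, x, (sub_sub_cancel y (L x)).symm⟩
  · rintro ⟨hy, x, hx⟩
    exact ⟨(x, y), ⟨hy, by rw [hx, sub_sub_cancel]⟩, rfl⟩

lemma existsUnique_isMinOn_residualFiber [FiniteDimensional ℝ E] [StrictConvexSpace ℝ E]
    (hL : Function.Injective L) (hR : IsClosed R) (hRc : Convex ℝ R) {z : E}
    (hz : z ∈ R + (LinearMap.range L : Set E)) (u : E) :
    ∃! p, p ∈ residualFiber L R z ∧ IsMinOn (fun p => ‖p.2 - u‖) (residualFiber L R z) p := by
  have hinj : InjOn Prod.snd (residualFiber L R z) := fun p hp q hq h =>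
    Prod.ext (hL (sub_right_injective (hp.2.trans (hq.2.symm.trans (by rw [h]))))) h
  have hclosed : IsClosed (Prod.snd '' residualFiber L R z) := by
    rw [image_snd_residualFiber]
    exact hR.inter ((LinearMap.range L).closed_of_finiteDimensional.preimage
      (continuous_sub_right z))
  have hconv : Convex ℝ (Prod.snd '' residualFiber L R z) :=
    (convex_residualFiber hRc z).linear_image (LinearMap.snd ℝ F E)
  exact hinj.existsUnique_isMinOn_comp (g := (‖· - u‖)) <|
    hconv.existsUnique_isMinOn_norm_sub hclosed ((residualFiber_nonempty hz).image _) u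

lemma exists_residualMinimizers_eq_residualFiber [FiniteDimensional ℝ E] [StrictConvexSpace ℝ E]
    (hR : IsPolyhedron R) (hne : R.Nonempty) :
    ∃ z ∈ R + (LinearMap.range L : Set E), residualMinimizers L R = residualFiber L R z := by
  have hD := hR.add_submodule (IsNoetherian.noetherian (LinearMap.range L))
  obtain ⟨z, hz, hmin⟩ :=
    hD.isClosed.exists_isMinOn_norm_sub (hne.add ⟨0, (LinearMap.range L).zero_mem⟩) 0
  exact ⟨z, hz, residualMinimizers_eq_residualFiber hD.convex hz (by simpa using hmin)⟩

end Residual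

theorem stmt19_general {m t : ℕ} (Φ : Matrix (Fin m) (Fin t) ℝ)
    (hrank : Function.Injective Φ.mulVec)
    (C : Finset (EuclideanSpace ℝ (Fin m)))
    (Yhat : EuclideanSpace ℝ (Fin m)) :
    ∀ Rg : Set (EuclideanSpace ℝ (Fin m)),
      Rg = {y | ∀ ω' ∈ C, ‖y - Yhat‖ ≤ ‖y - ω'‖} →
    ∀ Q : Set ((Fin t → ℝ) × EuclideanSpace ℝ (Fin m)),
      Q = {p | p.2 ∈ Rg ∧ ∀ x' : Fin t → ℝ, ∀ y' ∈ Rg,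
        ‖p.2 - toE (Φ.mulVec p.1)‖ ≤ ‖y' - toE (Φ.mulVec x')‖} →
    Q.Nonempty ∧ IsClosed Q ∧ Convex ℝ Q ∧
      ∃! p : (Fin t → ℝ) × EuclideanSpace ℝ (Fin m),
        p ∈ Q ∧ ∀ q ∈ Q, ‖p.2 - Yhat‖ ≤ ‖q.2 - Yhat‖ := by
  intro Rg hRg Q hQ
  let L : (Fin t → ℝ) →ₗ[ℝ] EuclideanSpace ℝ (Fin m) :=
    (WithLp.linearEquiv 2 ℝ (Fin m → ℝ)).symm.toLinearMap ∘ₗ Φ.mulVecLin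
  have hL : Function.Injective L := (WithLp.linearEquiv 2 ℝ (Fin m → ℝ)).symm.injective.comp hrank
  have hR : IsPolyhedron Rg := hRg ▸ isPolyhedron_voronoiCell C Yhat
  have hYhat : Yhat ∈ Rg := hRg ▸ fun ω' _ => by simp
  obtain ⟨z, hz, hQz⟩ := exists_residualMinimizers_eq_residualFiber (L := L) hR ⟨Yhat, hYhat⟩
  obtain rfl : Q = residualFiber L Rg z := hQ.trans hQz
  exact ⟨residualFiber_nonempty hz,
    isClosed_residualFiber L.continuous_of_finiteDimensional hR.isClosed z,
    convex_residualFiber hR.convex z,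
    existsUnique_isMinOn_residualFiber hL hR.isClosed hR.convex hz Yhat⟩

/-- Appendix C of the paper (existence and uniqueness of `(x̃, ỹ)` in Definition 2):
for a full-column-rank `Φ_T` and the Voronoi region `R` of a codeword `Ŷ` of a finite
codebook `C ⊆ ℝ^m`, the set `Q` of minimizers of `(x, y) ↦ ‖y − Φ_T x‖₂` over
`ℝ^t × R` is nonempty, closed, and convex, and contains a unique pair `(x̃, ỹ)`
minimizing `‖y − Ŷ‖₂` over `Q`. -/
theorem stmt19 {m t : ℕ} (Φ : Matrix (Fin m) (Fin t) ℝ)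
    (hrank : Function.Injective Φ.mulVec)
    (C : Finset (EuclideanSpace ℝ (Fin m))) (hC : C.Nonempty)
    (Yhat : EuclideanSpace ℝ (Fin m)) (hYhat : Yhat ∈ C) :
    ∀ Rg : Set (EuclideanSpace ℝ (Fin m)),
      Rg = {y | ∀ ω' ∈ C, ‖y - Yhat‖ ≤ ‖y - ω'‖} →
    ∀ Q : Set ((Fin t → ℝ) × EuclideanSpace ℝ (Fin m)),
      Q = {p | p.2 ∈ Rg ∧ ∀ x' : Fin t → ℝ, ∀ y' ∈ Rg,
        ‖p.2 - toE (Φ.mulVec p.1)‖ ≤ ‖y' - toE (Φ.mulVec x')‖} →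
    Q.Nonempty ∧ IsClosed Q ∧ Convex ℝ Q ∧
      ∃! p : (Fin t → ℝ) × EuclideanSpace ℝ (Fin m),
        p ∈ Q ∧ ∀ q ∈ Q, ‖p.2 - Yhat‖ ≤ ‖q.2 - Yhat‖ :=
  stmt19_general Φ hrank C Yhat
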